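/- In an (n, ℓ, r, t) secret sharing scheme with uniform secret, for any I ⊆ [n] with #I ≥ r and preprocessing functions allowing recovery of the secret, the communication overhead satisfies CO(I) = Σ_{i∈I} H(E(x_i)) − ℓ ≥ ℓ·t / (#I − t). -/

import Mathlib

open Finset

/-- A probability mass function on a finite sample space. -/
structure FinPMF (Ω : Type*) [Fintype Ω] where
  p : Ω → ℝ
  nonneg : ∀ ω, 0 ≤ p ω
  sum_one : ∑ ω, p ω = 1

/-- Probability of an event. -/
noncomputable def prob {Ω : Type*} [Fintype Ω] (μ : FinPMF Ω) (E : Set Ω) : ℝ :=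
  ∑ ω, E.indicator μ.p ω

/-- Shannon entropy (base `b`) of a random variable `X` on `(Ω, μ)`. -/
noncomputable def entropy {Ω A : Type*} [Fintype Ω] [Fintype A] (b : ℝ) (μ : FinPMF Ω)
    (X : Ω → A) : ℝ :=
  -∑ a, prob μ {ω | X ω = a} * Real.logb b (prob μ {ω | X ω = a})

/-- Conditional entropy `H(X | Y) = H(X, Y) − H(Y)`. -/
noncomputable def condEntropy {Ω A B : Type*} [Fintype Ω] [Fintype A] [Fintype B] (b : ℝ)
    (μ : FinPMF Ω) (X : Ω → A) (Y : Ω → B) : ℝ :=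
  entropy b μ (fun ω => (X ω, Y ω)) - entropy b μ Y

/-- Mutual information `I(X ; Y) = H(X) − H(X | Y)`. -/
noncomputable def mutualInfo {Ω A B : Type*} [Fintype Ω] [Fintype A] [Fintype B] (b : ℝ)
    (μ : FinPMF Ω) (X : Ω → A) (Y : Ω → B) : ℝ :=
  entropy b μ X - condEntropy b μ X Y

/-!
Averaging over the `t`-subsets `T ⊆ I` yields one with
`#I · Σ_{i ∈ T} H(E_i) ≥ t · Σ_{i ∈ I} H(E_i)`. Privacy and data processing give
`H(s | E_T) ≥ H(s | x_T) = ℓ`, recoverability gives `H(s | E_I) = 0`, and adding the shares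
outside `T` to the condition lowers the conditional entropy by at most their total entropy.
Hence `ℓ ≤ Σ_{i ∈ I \ T} H(E_i) ≤ (1 - t / #I) Σ_{i ∈ I} H(E_i)`, which rearranges to the bound.
-/

theorem sum_mul_logb_le_sum_mul_logb {ι : Type*} [Fintype ι] {b : ℝ} (hb : 1 < b)
    {p q : ι → ℝ} (hp : ∀ i, 0 ≤ p i) (hq : ∀ i, 0 ≤ q i) (hsupp : ∀ i, 0 < p i → 0 < q i)
    (hsum : ∑ i, q i ≤ ∑ i, p i) :
    ∑ i, p i * Real.logb b (q i) ≤ ∑ i, p i * Real.logb b (p i) := by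
  have hlogb : 0 < Real.log b := Real.log_pos hb
  have hterm i :
      p i * Real.logb b (q i) - p i * Real.logb b (p i) ≤ (q i - p i) / Real.log b := by
    rcases (hp i).eq_or_lt with h | h
    · simpa [← h] using div_nonneg (hq i) hlogb.le
    have hlog : p i * (Real.log (q i) - Real.log (p i)) ≤ q i - p i := by
      have := mul_le_mul_of_nonneg_left
        (Real.log_le_sub_one_of_pos (div_pos (hsupp i h) h)) h.le
      rw [Real.log_div (hsupp i h).ne' h.ne'] at this
      exact this.trans_eq (by field_simp)
    rw [Real.logb, Real.logb, ← mul_div_assoc, ← mul_div_assoc, ← sub_div, ← mul_sub]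
    exact div_le_div_of_nonneg_right hlog hlogb.le
  have := sum_le_sum fun i (_ : i ∈ univ) => hterm i
  rw [sum_sub_distrib, ← sum_div, sum_sub_distrib] at this
  linarith [div_nonpos_of_nonpos_of_nonneg (sub_nonpos.2 hsum) hlogb.le]

section Entropy

variable {Ω α β γ : Type*} [Fintype Ω] (μ : FinPMF Ω)

noncomputable def law (X : Ω → α) (a : α) : ℝ :=
  prob μ {ω | X ω = a}

theorem law_nonneg (X : Ω → α) (a : α) : 0 ≤ law μ X a :=
  sum_nonneg fun ω _ => Set.indicator_nonneg (fun ω _ => μ.nonneg ω) ω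

theorem law_le_law_comp (φ : α → β) (X : Ω → α) (a : α) :
    law μ X a ≤ law μ (fun ω => φ (X ω)) (φ a) :=
  sum_le_sum fun ω _ => Set.indicator_le_indicator_of_subset
    (fun ω (h : X ω = a) => show φ (X ω) = φ a by rw [h]) (fun ω => μ.nonneg ω) ω

theorem law_comp_of_injective {φ : α → β} (hφ : φ.Injective) (X : Ω → α) (a : α) :
    law μ (fun ω => φ (X ω)) (φ a) = law μ X a := by
  simp only [law, hφ.eq_iff]

variable [Fintype α] [Fintype β] [Fintype γ]

theorem entropy_eq_law (b : ℝ) (X : Ω → α) :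
    entropy b μ X = -∑ a, law μ X a * Real.logb b (law μ X a) :=
  rfl

theorem sum_law_mul (X : Ω → α) (f : α → ℝ) :
    ∑ a, law μ X a * f a = ∑ ω, μ.p ω * f (X ω) := by
  classical
  simp only [law, prob, sum_mul, Set.indicator_apply, Set.mem_ofPred_eq, ite_mul, zero_mul]
  rw [sum_comm]
  simp

theorem sum_law (X : Ω → α) : ∑ a, law μ X a = 1 := by
  simpa [μ.sum_one] using sum_law_mul μ X fun _ => 1

theorem sum_law_mul_comp (φ : α → β) (X : Ω → α) (f : β → ℝ) :
    ∑ a, law μ X a * f (φ a) = ∑ c, law μ (fun ω => φ (X ω)) c * f c := by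
  rw [sum_law_mul, sum_law_mul]

theorem sum_law_prod_left (X : Ω → α) (Y : Ω → β) (y : β) :
    ∑ x, law μ (fun ω => (X ω, Y ω)) (x, y) = law μ Y y := by
  classical
  simpa [Fintype.sum_prod_type] using
    sum_law_mul_comp μ Prod.snd (fun ω => (X ω, Y ω)) fun c => if c = y then 1 else 0

theorem entropy_eq_zero_of_subsingleton [Subsingleton α] (b : ℝ) (X : Ω → α) :
    entropy b μ X = 0 := by
  refine neg_eq_zero.2 (sum_eq_zero fun a _ => ?_)
  have : {ω | X ω = a} = Set.univ := Set.eq_univ_of_forall fun ω => Subsingleton.elim _ _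
  simp [this, prob, μ.sum_one]

theorem entropy_eq_logb_card_of_uniform (b : ℝ) (X : Ω → α)
    (hX : ∀ a, law μ X a = (Fintype.card α : ℝ)⁻¹) :
    entropy b μ X = Real.logb b (Fintype.card α) := by
  simp only [entropy_eq_law, hX, sum_const, card_univ, nsmul_eq_mul, Real.logb_inv]
  rcases eq_or_ne (Fintype.card α : ℝ) 0 with h | h
  · simp [h]
  · field_simp

theorem entropy_comp_of_injective (b : ℝ) {φ : α → β} (hφ : φ.Injective) (X : Ω → α) :
    entropy b μ (fun ω => φ (X ω)) = entropy b μ X := by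
  rw [entropy_eq_law, entropy_eq_law, ← sum_law_mul_comp μ φ X]
  simp only [law_comp_of_injective μ hφ]

theorem entropy_comp_le {b : ℝ} (hb : 1 < b) (φ : α → β) (X : Ω → α) :
    entropy b μ (fun ω => φ (X ω)) ≤ entropy b μ X := by
  rw [entropy_eq_law, entropy_eq_law, ← sum_law_mul_comp μ φ X, neg_le_neg_iff]
  refine sum_le_sum fun a _ => ?_
  rcases (law_nonneg μ X a).eq_or_lt with h | h
  · simp [← h]
  · exact mul_le_mul_of_nonneg_left
      (Real.logb_le_logb_of_le hb h (law_le_law_comp μ φ X a)) h.le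

theorem condEntropy_le_condEntropy_comp {b : ℝ} (hb : 1 < b) (X : Ω → α) (Y : Ω → β)
    (g : β → γ) : condEntropy b μ X Y ≤ condEntropy b μ X (fun ω => g (Y ω)) := by
  set p := law μ (fun ω => (X ω, Y ω))
  set pY := law μ Y
  set pXZ := law μ (fun ω => (X ω, g (Y ω)))
  set pZ := law μ (fun ω => g (Y ω))
  -- `q` is the joint law of `(X', Y)`, where `X'` is drawn from the law of `X` given `g Y`.
  set q : α × β → ℝ := fun c => pY c.2 * pXZ (c.1, g c.2) / pZ (g c.2)
  have hY c : p c ≤ pY c.2 := law_le_law_comp μ Prod.snd _ c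
  have hXZ c : p c ≤ pXZ (c.1, g c.2) := law_le_law_comp μ (fun c => (c.1, g c.2)) _ c
  have hZ c : p c ≤ pZ (g c.2) := law_le_law_comp μ (fun c => g c.2) _ c
  have hq_sum : ∑ c, q c ≤ ∑ c, p c := by
    rw [sum_law, Fintype.sum_prod_type_right, ← sum_law μ Y]
    refine sum_le_sum fun y _ => ?_
    simp only [q, ← sum_div, ← mul_sum, pXZ, sum_law_prod_left]
    rcases (law_nonneg μ (fun ω => g (Y ω)) (g y)).eq_or_lt with h | h
    · simpa [pZ, ← h] using law_nonneg μ Y y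
    · rw [mul_div_assoc, div_self h.ne', mul_one]
  have hgibbs : ∑ c, p c * Real.logb b (q c) ≤ ∑ c, p c * Real.logb b (p c) :=
    sum_mul_logb_le_sum_mul_logb hb (law_nonneg _ _)
      (fun c => div_nonneg (mul_nonneg (law_nonneg _ _ _) (law_nonneg _ _ _)) (law_nonneg _ _ _))
      (fun c hc => div_pos (mul_pos (hc.trans_le (hY c)) (hc.trans_le (hXZ c)))
        (hc.trans_le (hZ c))) hq_sum
  have hsplit c : p c * Real.logb b (q c) = p c * Real.logb b (pY c.2)
      + p c * Real.logb b (pXZ (c.1, g c.2)) - p c * Real.logb b (pZ (g c.2)) := by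
    rcases (law_nonneg μ (fun ω => (X ω, Y ω)) c).eq_or_lt with h | h
    · simp [p, ← h]
    rw [Real.logb_div (mul_pos (h.trans_le (hY c)) (h.trans_le (hXZ c))).ne'
      (h.trans_le (hZ c)).ne', Real.logb_mul (h.trans_le (hY c)).ne' (h.trans_le (hXZ c)).ne']
    ring
  have hY_sum : ∑ c, p c * Real.logb b (pY c.2) = ∑ y, pY y * Real.logb b (pY y) :=
    sum_law_mul_comp μ Prod.snd (fun ω => (X ω, Y ω)) fun y => Real.logb b (pY y)
  have hXZ_sum : ∑ c, p c * Real.logb b (pXZ (c.1, g c.2)) = ∑ d, pXZ d * Real.logb b (pXZ d) :=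
    (sum_law_mul_comp μ (fun c => (c.1, g c.2)) (fun ω => (X ω, Y ω))
      fun d => Real.logb b (pXZ d) :)
  have hZ_sum : ∑ c, p c * Real.logb b (pZ (g c.2)) = ∑ z, pZ z * Real.logb b (pZ z) :=
    (sum_law_mul_comp μ (fun c => g c.2) (fun ω => (X ω, Y ω)) fun z => Real.logb b (pZ z) :)
  simp only [hsplit, sum_add_distrib, sum_sub_distrib, hY_sum, hXZ_sum, hZ_sum] at hgibbs
  simp only [condEntropy, entropy_eq_law]
  linarith

theorem entropy_prod_le {b : ℝ} (hb : 1 < b) (X : Ω → α) (Y : Ω → β) :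
    entropy b μ (fun ω => (X ω, Y ω)) ≤ entropy b μ X + entropy b μ Y := by
  have h := condEntropy_le_condEntropy_comp μ hb X Y fun _ => ()
  have hX : entropy b μ (fun ω => (X ω, ())) = entropy b μ X :=
    (entropy_comp_of_injective μ b (φ := fun a => (a, ())) (fun _ _ h => congrArg Prod.fst h) X :)
  simp only [condEntropy, hX, entropy_eq_zero_of_subsingleton] at h
  linarith

theorem entropy_pi_le_sum {ι : Type*} [DecidableEq ι] {κ : ι → Type*} [∀ i, Fintype (κ i)]
    {b : ℝ} (hb : 1 < b) (Y : ∀ i, Ω → κ i) (s : Finset ι) :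
    entropy b μ (fun ω (i : s) => Y i ω) ≤ ∑ i ∈ s, entropy b μ (Y i) := by
  induction s using Finset.induction_on with
  | empty => simp [entropy_eq_zero_of_subsingleton]
  | @insert a s ha ih =>
    have hsplit : Function.Injective fun (v : ∀ i : (insert a s : Finset ι), κ i) =>
        (v ⟨a, mem_insert_self a s⟩, fun i : s => v ⟨i, mem_insert_of_mem i.2⟩) := by
      intro u v h
      funext ⟨i, hi⟩
      rcases mem_insert.1 hi with rfl | hi
      exacts [congrArg Prod.fst h, congrFun (congrArg Prod.snd h) ⟨i, hi⟩]
    rw [← entropy_comp_of_injective μ b hsplit, sum_insert ha]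
    exact (entropy_prod_le μ hb _ _).trans (add_le_add le_rfl ih)

theorem condEntropy_restrict_le {ι : Type*} [Fintype ι] [DecidableEq ι] {κ : ι → Type*}
    [∀ i, Fintype (κ i)] {b : ℝ} (hb : 1 < b) (X : Ω → α) (Y : ∀ i, Ω → κ i) (s : Finset ι) :
    condEntropy b μ X (fun ω (i : s) => Y i ω)
      ≤ condEntropy b μ X (fun ω i => Y i ω) + ∑ i ∈ sᶜ, entropy b μ (Y i) := by
  have hsplit : Function.Injective fun (v : ∀ i, κ i) =>
      ((fun i : s => v i), (fun i : (sᶜ : Finset ι) => v i)) := by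
    intro u v h
    funext i
    by_cases hi : i ∈ s
    exacts [congrFun (congrArg Prod.fst h) ⟨i, hi⟩,
      congrFun (congrArg Prod.snd h) ⟨i, mem_compl.2 hi⟩]
  have hXY := entropy_comp_le μ hb (fun c => (c.1, fun i : s => c.2 i))
    (fun ω => (X ω, fun i => Y i ω))
  have hY := entropy_comp_of_injective μ b hsplit fun ω i => Y i ω
  have hYs := entropy_prod_le μ hb (fun ω (i : s) => Y i ω) (fun ω (i : (sᶜ : Finset ι)) => Y i ω)
  have hYsc := entropy_pi_le_sum μ hb Y sᶜ
  simp only [condEntropy] at hXY hY ⊢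
  linarith

end Entropy

theorem sum_powersetCard_succ_sum {ι M : Type*} [DecidableEq ι] [AddCommMonoid M]
    (s : Finset ι) (k : ℕ) (f : ι → M) :
    ∑ T ∈ s.powersetCard (k + 1), ∑ i ∈ T, f i = (#s - 1).choose k • ∑ i ∈ s, f i := by
  rw [sum_comm' (t' := s) (s' := fun i => (s.powersetCard (k + 1)).filter ({i} ⊆ ·))]
  · rw [smul_sum]
    refine sum_congr rfl fun i hi => ?_
    rw [sum_const, card_filter_powersetCard_subset _ _ _ (singleton_subset_iff.2 hi)
      (by simp), card_singleton, Nat.add_sub_cancel]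
  · intro T i
    simp only [mem_filter, mem_powersetCard, singleton_subset_iff]
    exact ⟨fun h => ⟨⟨h.1, h.2⟩, h.1.1 h.2⟩, fun h => ⟨h.1.1, h.1.2⟩⟩

theorem exists_subset_card_eq_mul_sum_le {ι : Type*} [DecidableEq ι] (s : Finset ι) (f : ι → ℝ)
    {t : ℕ} (ht : t ≤ #s) :
    ∃ T ⊆ s, #T = t ∧ t * ∑ i ∈ s, f i ≤ #s * ∑ i ∈ T, f i := by
  obtain _ | k := t
  · exact ⟨∅, empty_subset s, card_empty, by simp⟩
  obtain ⟨m, hm⟩ : ∃ m, #s = m + 1 := Nat.exists_eq_add_of_le' (by omega)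
  have hcount : ((#s).choose (k + 1) : ℝ) * (k + 1) = #s * (#s - 1).choose k := by
    rw [hm, Nat.add_sub_cancel]
    exact_mod_cast (Nat.add_one_mul_choose_eq m k).symm
  have hsum : ∑ T ∈ s.powersetCard (k + 1), ((k + 1 : ℕ) * ∑ i ∈ s, f i : ℝ)
      = ∑ T ∈ s.powersetCard (k + 1), (#s * ∑ i ∈ T, f i : ℝ) := by
    rw [sum_const, card_powersetCard, ← mul_sum, sum_powersetCard_succ_sum, nsmul_eq_mul,
      nsmul_eq_mul, Nat.cast_add_one, ← mul_assoc, hcount, mul_assoc]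
  obtain ⟨T, hT, hle⟩ := exists_le_of_sum_le (powersetCard_nonempty.2 ht) hsum.le
  rw [mem_powersetCard] at hT
  exact ⟨T, hT.1, hT.2, hle⟩

theorem communication_overhead_lower_bound_general
    {Ω A : Type*} [Fintype Ω] [Fintype A] (hA : 2 ≤ Fintype.card A)
    (n ℓ t : ℕ)
    (μ : FinPMF Ω) (S : Ω → Fin ℓ → A) (X : Ω → Fin n → A)
    (hunif : ∀ s : Fin ℓ → A, prob μ {ω | S ω = s} = (Fintype.card (Fin ℓ → A) : ℝ)⁻¹)
    (hpriv : ∀ J : Finset (Fin n), J.card ≤ t →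
      condEntropy (Fintype.card A) μ S (fun ω (j : { i // i ∈ J }) => X ω j.1)
        = entropy (Fintype.card A) μ S)
    (I : Finset (Fin n)) (htI : t < I.card)
    (B : { i // i ∈ I } → Type*) [∀ i, Fintype (B i)]
    (E : ∀ i : { i // i ∈ I }, A → B i)
    (hdec : condEntropy (Fintype.card A) μ S
      (fun ω (i : { i // i ∈ I }) => E i (X ω i.1)) = 0) :
    (ℓ * t : ℝ) / (I.card - t)
      ≤ (∑ i : { i // i ∈ I }, entropy (Fintype.card A) μ (fun ω => E i (X ω i.1)))
          - ℓ := by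
  have hb : (1 : ℝ) < Fintype.card A := by exact_mod_cast hA
  set H : { i // i ∈ I } → ℝ := fun i => entropy (Fintype.card A) μ fun ω => E i (X ω i.1)
  obtain ⟨T, -, hT, havg⟩ := exists_subset_card_eq_mul_sum_le univ H (t := t)
    (by simpa using htI.le)
  rw [card_univ, Fintype.card_coe] at havg
  set J : Finset (Fin n) := T.map (Function.Embedding.subtype _)
  have hS : entropy (Fintype.card A) μ S = ℓ := by
    rw [entropy_eq_logb_card_of_uniform μ _ S hunif, Fintype.card_fun, Fintype.card_fin,
      Nat.cast_pow, Real.logb_pow, Real.logb_self_eq_one hb, mul_one]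
  have hkey : (ℓ : ℝ) ≤ ∑ i ∈ Tᶜ, H i := calc
    (ℓ : ℝ) = condEntropy (Fintype.card A) μ S fun ω (j : J) => X ω j := by
      rw [hpriv J (by simp [J, hT]), hS]
    _ ≤ condEntropy (Fintype.card A) μ S fun ω (i : T) => E i.1 (X ω i.1.1) :=
      (condEntropy_le_condEntropy_comp μ hb S (fun ω (j : J) => X ω j)
        fun v (i : T) => E i.1 (v ⟨i.1.1, mem_map_of_mem _ i.2⟩) :)
    _ ≤ condEntropy (Fintype.card A) μ S (fun ω i => E i (X ω i.1)) + ∑ i ∈ Tᶜ, H i :=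
      (condEntropy_restrict_le μ hb S (fun i ω => E i (X ω i.1)) T :)
    _ = ∑ i ∈ Tᶜ, H i := by rw [hdec, zero_add]
  have htI' : (t : ℝ) < I.card := by exact_mod_cast htI
  change (ℓ * t : ℝ) / (I.card - t) ≤ ∑ i, H i - ℓ
  rw [← sum_add_sum_compl T] at havg ⊢
  rw [div_le_iff₀ (sub_pos.2 htI')]
  nlinarith [mul_le_mul_of_nonneg_left hkey (Nat.cast_nonneg (α := ℝ) I.card)]

/-- In an `(n, ℓ, r, t)` secret sharing scheme with uniform secret,
for any `I` with `#I ≥ r` and preprocessing functions from which the secret is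
recoverable, the communication overhead satisfies
`Σ_{i∈I} H(E(x_i)) − ℓ ≥ ℓ·t / (#I − t)` (entropies with base `#𝒜`). -/
theorem communication_overhead_lower_bound
    {Ω A : Type*} [Fintype Ω] [Fintype A] (hA : 2 ≤ Fintype.card A)
    (n ℓ r t : ℕ) (hℓ : 1 ≤ ℓ) (hr : r ≤ n)
    (μ : FinPMF Ω) (S : Ω → Fin ℓ → A) (X : Ω → Fin n → A)
    (hunif : ∀ s : Fin ℓ → A, prob μ {ω | S ω = s} = (Fintype.card (Fin ℓ → A) : ℝ)⁻¹)
    (hrec : ∀ J : Finset (Fin n), r ≤ J.card →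
      condEntropy (Fintype.card A) μ S (fun ω (j : { i // i ∈ J }) => X ω j.1) = 0)
    (hpriv : ∀ J : Finset (Fin n), J.card ≤ t →
      condEntropy (Fintype.card A) μ S (fun ω (j : { i // i ∈ J }) => X ω j.1)
        = entropy (Fintype.card A) μ S)
    (I : Finset (Fin n)) (hI : r ≤ I.card) (htI : t < I.card)
    (B : { i // i ∈ I } → Type*) [∀ i, Fintype (B i)]
    (E : ∀ i : { i // i ∈ I }, A → B i)
    (hdec : condEntropy (Fintype.card A) μ S
      (fun ω (i : { i // i ∈ I }) => E i (X ω i.1)) = 0) :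
    (ℓ * t : ℝ) / (I.card - t)
      ≤ (∑ i : { i // i ∈ I }, entropy (Fintype.card A) μ (fun ω => E i (X ω i.1)))
          - ℓ :=
  communication_overhead_lower_bound_general hA n ℓ t μ S X hunif hpriv I htI B E hdec
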